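/- Let C be a 3×3 unitary matrix with entries a^{(i,j)}, e^{iΔ} = det C, and λ ∈ ℝ with e^{iλ} ≠ a^{(2,2)}. Then A(λ)D(λ) − B(λ)C(λ) = −e^{i(λ+Δ)} · (e^{−iλ} − conj(a^{(2,2)}))/(e^{iλ} − a^{(2,2)}). -/

import Mathlib

open Complex Matrix ComplexConjugate

noncomputable section

/-- `A(λ)` for a 3×3 coin matrix `M`. -/
def coefA (M : Matrix (Fin 3) (Fin 3) ℂ) (lam : ℝ) : ℂ :=
  M 0 0 + M 0 1 * M 1 0 / (Complex.exp (lam * Complex.I) - M 1 1)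

/-- `B(λ)` for a 3×3 coin matrix `M`. -/
def coefB (M : Matrix (Fin 3) (Fin 3) ℂ) (lam : ℝ) : ℂ :=
  M 0 2 + M 0 1 * M 1 2 / (Complex.exp (lam * Complex.I) - M 1 1)

/-- `C(λ)` for a 3×3 coin matrix `M`. -/
def coefC (M : Matrix (Fin 3) (Fin 3) ℂ) (lam : ℝ) : ℂ :=
  M 2 0 + M 2 1 * M 1 0 / (Complex.exp (lam * Complex.I) - M 1 1)

/-- `D(λ)` for a 3×3 coin matrix `M`. -/
def coefD (M : Matrix (Fin 3) (Fin 3) ℂ) (lam : ℝ) : ℂ :=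
  M 2 2 + M 2 1 * M 1 2 / (Complex.exp (lam * Complex.I) - M 1 1)

/-! For a unitary `M` the adjugate is `det M • Mᴴ`; its `(1,1)` entry says that the complementary
minor `a⁽¹¹⁾a⁽³³⁾ - a⁽¹³⁾a⁽³¹⁾` equals `det M · conj a⁽²²⁾`. On the other hand, clearing the
denominator `e^{iλ} - a⁽²²⁾` (a Schur complement computation) gives
`AD - BC = (e^{iλ} · minor - det M) / (e^{iλ} - a⁽²²⁾)` for any `3 × 3` matrix. -/

theorem Matrix.adjugate_eq_det_smul_star_of_mem_unitaryGroup {n α : Type*} [Fintype n]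
    [DecidableEq n] [CommRing α] [StarRing α] {U : Matrix n n α}
    (hU : U ∈ unitaryGroup n α) : U.adjugate = U.det • star U :=
  calc U.adjugate = (star U * U) * U.adjugate := by rw [hU.1, one_mul]
    _ = U.det • star U := by rw [mul_assoc, mul_adjugate, Matrix.mul_smul, mul_one]

theorem Matrix.adjugate_apply_of_mem_unitaryGroup {n α : Type*} [Fintype n] [DecidableEq n]
    [CommRing α] [StarRing α] {U : Matrix n n α} (hU : U ∈ unitaryGroup n α) (i j : n) :
    U.adjugate i j = U.det * star (U j i) := by
  rw [adjugate_eq_det_smul_star_of_mem_unitaryGroup hU, smul_apply, star_apply, smul_eq_mul]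

theorem coefAD_sub_coefBC_eq_div (M : Matrix (Fin 3) (Fin 3) ℂ) (lam : ℝ)
    (hne : Complex.exp (lam * Complex.I) ≠ M 1 1) :
    coefA M lam * coefD M lam - coefB M lam * coefC M lam =
      (Complex.exp (lam * Complex.I) * M.adjugate 1 1 - M.det) /
        (Complex.exp (lam * Complex.I) - M 1 1) := by
  have he : Complex.exp (lam * Complex.I) - M 1 1 ≠ 0 := sub_ne_zero.mpr hne
  rw [coefA, coefB, coefC, coefD, adjugate_fin_three, det_fin_three]
  simp only [of_apply, cons_val', cons_val_one, cons_val_zero, cons_val_fin_one]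
  field_simp
  ring

/-- `A(λ)D(λ) − B(λ)C(λ) = −e^{i(λ+Δ)} (e^{−iλ} − conj a^{(2,2)})/(e^{iλ} − a^{(2,2)})`
for a 3×3 unitary coin `M`, where `e^{iΔ} = det M`. -/
theorem coefAD_sub_coefBC (M : Matrix (Fin 3) (Fin 3) ℂ)
    (hM : M ∈ Matrix.unitaryGroup (Fin 3) ℂ) (lam : ℝ)
    (hne : Complex.exp (lam * Complex.I) ≠ M 1 1) :
    coefA M lam * coefD M lam - coefB M lam * coefC M lam =
      -(Complex.exp (lam * Complex.I) * M.det) *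
        ((Complex.exp (-(lam * Complex.I)) - conj (M 1 1)) /
          (Complex.exp (lam * Complex.I) - M 1 1)) := by
  rw [coefAD_sub_coefBC_eq_div M lam hne, adjugate_apply_of_mem_unitaryGroup hM,
    Complex.star_def, Complex.exp_neg]
  field_simp
  ring
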